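/- Let r and s be any nonnegative rational numbers with r ≤ s. Then every rational number x with r ≤ x ≤ s appears in the tree T(r, s). -/

import Mathlib

/-!
Write `crossDet x y = y.num * x.den - x.num * y.den`, an integer that is at least `1`
whenever `x < y`. If `p < x < q` are neighbours in some `S r s n`, the mediant `m` of `p` and
`q` appears in the next row between them; unless `x = m`, the point `x` lies strictly between
`p` and `m` or between `m` and `q`. Since `m.den ≤ p.den + q.den`, the identity
`crossDet x m * (p.den + q.den) = (crossDet x q - crossDet p x) * m.den` shows that
`crossDet p x + crossDet x q` strictly decreases on passing to the new pair of neighbours,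
so the descent stops, and it can only stop at `x = m`.
-/

/-- The mediant of two rationals `p` and `q`: `(num p + num q) / (den p + den q)`. -/
def mediant (p q : ℚ) : ℚ := ((p.num + q.num : ℤ) : ℚ) / ((p.den + q.den : ℕ) : ℚ)

/-- Insert between every pair of consecutive entries of a list their mediant. -/
def insertMediants : List ℚ → List ℚ
  | [] => []
  | [p] => [p]
  | p :: q :: rest => p :: mediant p q :: insertMediants (q :: rest)

/-- The sequences of the tree `T(r, s)`: `S r s 0 = [r, s]`, and each successive
sequence is obtained by inserting mediants between consecutive entries. -/
def S (r s : ℚ) : ℕ → List ℚ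
  | 0 => [r, s]
  | n + 1 => insertMediants (S r s n)

lemma insertMediants_cons_prefix (b : ℚ) (l : List ℚ) : [b] <+: insertMediants (b :: l) := by
  cases l <;> simp [insertMediants]

lemma insertMediants_suffix_cons (a : ℚ) (l : List ℚ) :
    insertMediants l <:+ insertMediants (a :: l) := by
  cases l with
  | nil => simp [insertMediants]
  | cons b l => exact (List.suffix_cons _ _).trans (List.suffix_cons _ _)

lemma infix_insertMediants {p q : ℚ} {l : List ℚ} (h : [p, q] <:+: l) :
    [p, mediant p q, q] <:+: insertMediants l := by
  induction l with
  | nil => simp at h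
  | cons a l ih =>
    rcases List.infix_cons_iff.1 h with ⟨t, ht⟩ | h
    · obtain ⟨rfl, rfl⟩ : p = a ∧ q :: t = l := by simpa using ht
      rw [insertMediants]
      exact (List.prefix_cons_inj _).2 ((List.prefix_cons_inj _).2
        (insertMediants_cons_prefix q t)) |>.isInfix
    · exact (ih h).trans (insertMediants_suffix_cons a l).isInfix

lemma mediant_num_mul (p q : ℚ) :
    (mediant p q).num * (p.den + q.den) = (p.num + q.num) * (mediant p q).den := by
  have h : Rat.divInt (mediant p q).num (mediant p q).den =
      Rat.divInt (p.num + q.num) (p.den + q.den) := by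
    rw [Rat.num_divInt_den, Rat.divInt_eq_div, mediant]
    push_cast
    rfl
  rwa [Rat.divInt_eq_divInt_iff (by positivity) (by positivity)] at h

lemma mediant_den_le (p q : ℚ) : ((mediant p q).den : ℤ) ≤ p.den + q.den := by
  refine Int.le_of_dvd (by positivity) ?_
  have h : mediant p q = Rat.divInt (p.num + q.num) (p.den + q.den) := by
    rw [Rat.divInt_eq_div, mediant]
    push_cast
    rfl
  exact h ▸ Rat.den_dvd _ _

def crossDet (x y : ℚ) : ℤ := y.num * x.den - x.num * y.den

lemma crossDet_pos_iff {x y : ℚ} : 0 < crossDet x y ↔ x < y := by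
  rw [crossDet, sub_pos, Rat.lt_iff]

lemma crossDet_swap (x y : ℚ) : crossDet y x = -crossDet x y := by
  unfold crossDet
  ring

lemma crossDet_mediant_mul (x p q : ℚ) :
    crossDet x (mediant p q) * (p.den + q.den) =
      (crossDet x q - crossDet p x) * (mediant p q).den := by
  unfold crossDet
  linear_combination (x.den : ℤ) * mediant_num_mul p q

lemma crossDet_mediant_right_le {x p q : ℚ} (h : x < mediant p q) :
    crossDet x (mediant p q) ≤ crossDet x q - crossDet p x := by
  have := crossDet_mediant_mul x p q
  have := mediant_den_le p q
  have := crossDet_pos_iff.2 h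
  nlinarith [(mediant p q).pos]

lemma crossDet_mediant_left_le {x p q : ℚ} (h : mediant p q < x) :
    crossDet (mediant p q) x ≤ crossDet p x - crossDet x q := by
  have := crossDet_mediant_mul x p q
  have := mediant_den_le p q
  have := crossDet_pos_iff.2 h
  rw [crossDet_swap] at this ⊢
  nlinarith [(mediant p q).pos]

lemma exists_mem_S_of_infix {r s p q x : ℚ} {n : ℕ} (h : [p, q] <:+: S r s n)
    (hpx : p ≤ x) (hxq : x ≤ q) : ∃ k, x ∈ S r s k := by
  induction hN : (crossDet p x + crossDet x q).toNat using Nat.strong_induction_on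
    generalizing p q n with
  | _ N ih =>
  rcases hpx.eq_or_lt with rfl | hpx
  · exact ⟨n, h.subset (by simp)⟩
  rcases hxq.eq_or_lt with rfl | hxq
  · exact ⟨n, h.subset (by simp)⟩
  have hp := crossDet_pos_iff.2 hpx
  have hq := crossDet_pos_iff.2 hxq
  have hmed : [p, mediant p q, q] <:+: S r s (n + 1) := infix_insertMediants h
  rcases lt_trichotomy x (mediant p q) with hxm | rfl | hmx
  · have := crossDet_mediant_right_le hxm
    exact ih _ (by omega) (List.IsInfix.trans ⟨[], [q], rfl⟩ hmed) hpx.le hxm.le rfl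
  · exact ⟨n + 1, hmed.subset (by simp)⟩
  · have := crossDet_mediant_left_le hmx
    exact ih _ (by omega) (List.IsInfix.trans ⟨[p], [], rfl⟩ hmed) hmx.le hxq.le rfl

theorem appears_of_mem_interval_general (r s : ℚ)
    (x : ℚ) (hx1 : r ≤ x) (hx2 : x ≤ s) :
    ∃ n, x ∈ S r s n :=
  exists_mem_S_of_infix (n := 0) (List.infix_refl _) hx1 hx2

/-- For any nonnegative rationals `r ≤ s`, every rational `x` with `r ≤ x ≤ s` appears
in the tree `T(r, s)`. -/
theorem appears_of_mem_interval (r s : ℚ) (hr : 0 ≤ r) (hrs : r ≤ s)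
    (x : ℚ) (hx1 : r ≤ x) (hx2 : x ≤ s) :
    ∃ n, x ∈ S r s n :=
  appears_of_mem_interval_general r s x hx1 hx2
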